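/- Fix α ∈ (1/2, 1] and let s > 3/4 - α/2. Let a be a real number with a ≤ 2α-1, and assume additionally a < 2s+α-1 in case 2s+α-1 ≤ 2α-1. Let u : ℤ → ℂ satisfy ‖u‖_{H^s} < ∞, and define for each k ∈ ℤ the sum R_k = -|u_k|² u_k + ∑_{(m,n) ∈ ℤ²: m ≠ 0, n ≠ 0, |m||n| ≤ ⟨k⟩^{2-2α}} u_{k+m} · conj(u_{k+m+n}) · u_{k+n}. Then there is a constant C = C(s,α,a), independent of u, such that (∑_{k∈ℤ} ⟨k⟩^{2(s+a)} |R_k|²)^{1/2} ≤ C ‖u‖_{H^s}³. -/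

import Mathlib

/-- Japanese bracket `⟨x⟩ = (1+x²)^{1/2}`. -/
noncomputable def jb (x : ℝ) : ℝ := Real.sqrt (1 + x ^ 2)

/-- The Sobolev norm `‖u‖_{H^s} = (∑_k ⟨k⟩^{2s} |u_k|²)^{1/2}` of a sequence `u : ℤ → ℂ`. -/
noncomputable def HsNorm (s : ℝ) (u : ℤ → ℂ) : ℝ :=
  Real.sqrt (∑' k : ℤ, jb (k : ℝ) ^ (2 * s) * ‖u k‖ ^ 2)

/-- The resonant term
`R_k = -|u_k|² u_k + ∑_{m≠0, n≠0, |m||n| ≤ ⟨k⟩^{2-2α}} u_{k+m} conj(u_{k+m+n}) u_{k+n}`. -/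
noncomputable def Rterm (α : ℝ) (u : ℤ → ℂ) (k : ℤ) : ℂ :=
  -((‖u k‖ : ℂ) ^ 2 * u k) +
    ∑' p : {p : ℤ × ℤ // p.1 ≠ 0 ∧ p.2 ≠ 0 ∧
        |(p.1 : ℝ)| * |(p.2 : ℝ)| ≤ jb (k : ℝ) ^ (2 - 2 * α)},
      u (k + p.1.1) * star (u (k + p.1.1 + p.1.2)) * u (k + p.1.2)

open scoped ENNReal NNReal
open MeasureTheory

lemma one_le_jb (x : ℝ) : 1 ≤ jb x := by
  have := Real.sqrt_le_sqrt (show (1:ℝ) ≤ 1 + x^2 by nlinarith [sq_nonneg x])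
  simpa [jb] using this

lemma jb_pos (x : ℝ) : 0 < jb x := lt_of_lt_of_le one_pos (one_le_jb x)

lemma jb_nonneg (x : ℝ) : 0 ≤ jb x := (jb_pos x).le

lemma abs_le_jb (x : ℝ) : |x| ≤ jb x := by
  rw [jb, ← Real.sqrt_sq_eq_abs]
  exact Real.sqrt_le_sqrt (by nlinarith)

lemma jb_add_ge (y x : ℝ) : jb y - |x| ≤ jb (y + x) := by
  have hA : 0 ≤ jb (y + x) + |x| := add_nonneg (jb_nonneg _) (abs_nonneg _)
  have h1 : jb (y + x) ^ 2 = 1 + (y + x) ^ 2 := Real.sq_sqrt (by positivity)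
  have h3 : |y + x| ≤ jb (y + x) := abs_le_jb _
  have key : 1 + y ^ 2 ≤ (jb (y + x) + |x|) ^ 2 := by
    nlinarith [mul_le_mul_of_nonneg_left h3 (abs_nonneg x), abs_mul x (y + x),
      neg_abs_le (x * (y + x)), abs_nonneg x, sq_abs x]
  have : jb y ≤ jb (y + x) + |x| := by
    have := Real.sqrt_le_sqrt key
    rwa [show Real.sqrt (1 + y ^ 2) = jb y from rfl, Real.sqrt_sq hA] at this
  linarith

/-- Cauchy–Schwarz for `ℝ≥0∞`-valued tsums. -/
lemma tsum_cs {ι : Type*} [Countable ι] [MeasurableSpace ι] [MeasurableSingletonClass ι]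
    (f g : ι → ℝ≥0∞) : (∑' i, f i * g i) ^ 2 ≤ (∑' i, f i ^ 2) * (∑' i, g i ^ 2) := by
  have hpq : Real.HolderConjugate 2 2 := Real.HolderConjugate.two_two
  have h := ENNReal.lintegral_mul_le_Lp_mul_Lq (Measure.count : Measure ι) hpq
    (measurable_of_countable f).aemeasurable (measurable_of_countable g).aemeasurable
  rw [lintegral_count] at h
  simp only [Pi.mul_apply] at h
  have h2 : ∀ h : ι → ℝ≥0∞, ∫⁻ i, h i ^ (2:ℝ) ∂(Measure.count) = ∑' i, h i ^ 2 := by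
    intro h
    rw [lintegral_count]
    congr 1; funext i
    rw [← ENNReal.rpow_natCast (h i) 2]; norm_num
  rw [h2 f, h2 g] at h
  calc (∑' i, f i * g i) ^ 2 ≤ ((∑' i, f i ^ 2) ^ (1/2:ℝ) * (∑' i, g i ^ 2) ^ (1/2:ℝ)) ^ 2 :=
        pow_le_pow_left' h 2
    _ = (∑' i, f i ^ 2) * (∑' i, g i ^ 2) := by
        rw [mul_pow, ← ENNReal.rpow_natCast (_ ^ (1/2:ℝ)) 2, ← ENNReal.rpow_natCast (_ ^ (1/2:ℝ)) 2,
          ← ENNReal.rpow_mul, ← ENNReal.rpow_mul]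
        norm_num

lemma jb_comp (θ : ℝ) (hθ0 : 0 ≤ θ) (hθ1 : θ < 1) :
    ∃ c : ℝ, 0 < c ∧ c ≤ 1 ∧ ∀ y x : ℝ, |x| ≤ 2 * jb y ^ θ → c * jb y ≤ jb (y + x) := by
  set M : ℝ := (4 : ℝ) ^ (1 / (1 - θ)) with hM
  have h1θ : 0 < 1 - θ := by linarith
  have hM1 : 1 ≤ M := Real.one_le_rpow (by norm_num) (by positivity)
  have hMpos : 0 < M := lt_of_lt_of_le one_pos hM1
  refine ⟨min M⁻¹ (1 / 2), lt_min (by positivity) (by norm_num),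
    (min_le_right _ _).trans (by norm_num), fun y x hx => ?_⟩
  rcases le_or_gt (jb y) M with hcase | hcase
  · have h2 : min M⁻¹ (1 / 2) * jb y ≤ M⁻¹ * jb y :=
      mul_le_mul_of_nonneg_right (min_le_left _ _) (jb_nonneg y)
    have h3 : M⁻¹ * jb y ≤ 1 := by
      rw [inv_mul_le_iff₀ hMpos, mul_one]; exact hcase
    exact h2.trans (h3.trans (one_le_jb _))
  · have h4 : (4 : ℝ) ≤ jb y ^ (1 - θ) := by
      have : M ^ (1 - θ) ≤ jb y ^ (1 - θ) :=
        Real.rpow_le_rpow hMpos.le hcase.le h1θ.le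
      rwa [hM, ← Real.rpow_mul (by norm_num), one_div,
        inv_mul_cancel₀ (ne_of_gt h1θ), Real.rpow_one] at this
    have h5 : 4 * jb y ^ θ ≤ jb y := by
      have := mul_le_mul_of_nonneg_right h4 (Real.rpow_nonneg (jb_nonneg y) θ)
      rwa [← Real.rpow_add (jb_pos y), sub_add_cancel, Real.rpow_one] at this
    have h6 : |x| ≤ jb y / 2 := by linarith
    have h7 : jb y - |x| ≤ jb (y + x) := jb_add_ge y x
    have h8 : min M⁻¹ (1 / 2) * jb y ≤ 1 / 2 * jb y :=
      mul_le_mul_of_nonneg_right (min_le_right _ _) (jb_nonneg y)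
    linarith

lemma rho_exists (θ E : ℝ) (hθ0 : 0 ≤ θ) (hE : E < 0) :
    ∃ ρ : ℝ, 0 < ρ ∧ ∀ y t : ℝ, 1 ≤ t → t ≤ jb y ^ θ → jb y ^ E ≤ t ^ (-ρ) := by
  rcases eq_or_lt_of_le hθ0 with hθ | hθ
  · refine ⟨1, one_pos, fun y t ht1 ht2 => ?_⟩
    rw [← hθ, Real.rpow_zero] at ht2
    have ht : t = 1 := le_antisymm ht2 ht1
    rw [ht, Real.one_rpow]
    exact Real.rpow_le_one_of_one_le_of_nonpos (one_le_jb y) hE.le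
  · have hEθ : 0 < -E / θ := div_pos (neg_pos.mpr hE) hθ
    refine ⟨-E / θ, hEθ, fun y t ht1 ht2 => ?_⟩
    have htpos : (0 : ℝ) < t := lt_of_lt_of_le one_pos ht1
    have key : t ^ (-E / θ) ≤ jb y ^ (-E) := by
      have h1 : t ^ (-E / θ) ≤ (jb y ^ θ) ^ (-E / θ) :=
        Real.rpow_le_rpow htpos.le ht2 hEθ.le
      rwa [← Real.rpow_mul (jb_nonneg y), mul_div_cancel₀ _ (ne_of_gt hθ)] at h1
    have hL : jb y ^ E = (jb y ^ (-E))⁻¹ := by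
      rw [← Real.rpow_neg (jb_nonneg y), neg_neg]
    have hR : t ^ (-(-E / θ)) = (t ^ (-E / θ))⁻¹ := Real.rpow_neg htpos.le _
    rw [hL, hR]
    exact inv_anti₀ (by positivity) key

lemma count_bound (c : ℝ) :
    ∑' m : ℤ, (if m ≠ 0 ∧ |(m : ℝ)| ≤ c then (1 : ℝ≥0∞) else 0) ≤ ENNReal.ofReal (2 * c) := by
  by_cases hc : 1 ≤ c
  · set M : ℤ := ⌊c⌋ with hMdef
    have hM1 : 1 ≤ M := by
      rw [hMdef]; exact Int.le_floor.mpr (by exact_mod_cast hc)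
    set F : Finset ℤ := (Finset.Icc (-M) M).erase 0 with hF
    have h0 : ∀ m ∉ F, (if m ≠ 0 ∧ |(m : ℝ)| ≤ c then (1 : ℝ≥0∞) else 0) = 0 := by
      intro m hm
      rw [if_neg]
      intro ⟨hm0, hmc⟩
      apply hm
      rw [hF, Finset.mem_erase]
      refine ⟨hm0, Finset.mem_Icc.mpr ⟨?_, ?_⟩⟩
      · have : ((-m : ℤ) : ℝ) ≤ c := by push_cast; linarith [neg_le_abs (m : ℝ), hmc]
        have := Int.le_floor.mpr this
        omega
      · exact Int.le_floor.mpr ((le_abs_self _).trans hmc)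
    rw [tsum_eq_sum h0]
    have hcard : (F.card : ℝ) ≤ 2 * c := by
      have h2 : F.card = 2 * M.toNat := by
        rw [hF, Finset.card_erase_of_mem, Int.card_Icc]
        · omega
        · exact Finset.mem_Icc.mpr ⟨by omega, by omega⟩
      calc (F.card : ℝ) = ((2 * M.toNat : ℕ) : ℝ) := by rw [h2]
        _ = 2 * ((M.toNat : ℤ) : ℝ) := by push_cast; ring
        _ = 2 * (M : ℝ) := by rw [Int.toNat_of_nonneg (by omega : (0:ℤ) ≤ M)]
        _ ≤ 2 * c := by linarith [Int.floor_le c]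
    calc ∑ m ∈ F, (if m ≠ 0 ∧ |(m : ℝ)| ≤ c then (1 : ℝ≥0∞) else 0)
        ≤ ∑ _m ∈ F, 1 := Finset.sum_le_sum (fun i _ => by split <;> simp)
      _ = (F.card : ℝ≥0∞) := by simp
      _ = ENNReal.ofReal (F.card : ℝ) := by
          rw [ENNReal.ofReal_natCast]
      _ ≤ ENNReal.ofReal (2 * c) := ENNReal.ofReal_le_ofReal hcard
  · have hz : ∀ m : ℤ, (if m ≠ 0 ∧ |(m : ℝ)| ≤ c then (1 : ℝ≥0∞) else 0) = 0 := by
      intro m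
      rw [if_neg]
      intro ⟨hm0, hmc⟩
      have : (1 : ℝ) ≤ |(m : ℝ)| := by
        have := Int.one_le_abs hm0
        exact_mod_cast this
      exact hc (this.trans hmc)
    simp only [hz, tsum_zero]
    exact zero_le

/-- weighted coefficient -/
noncomputable def wn (s : ℝ) (u : ℤ → ℂ) (j : ℤ) : ℝ := jb (j : ℝ) ^ s * ‖u j‖

lemma wn_nonneg (s : ℝ) (u : ℤ → ℂ) (j : ℤ) : 0 ≤ wn s u j :=
  mul_nonneg (Real.rpow_nonneg (jb_nonneg _) _) (norm_nonneg _)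

def Aset (α : ℝ) (k : ℤ) : Set (ℤ × ℤ) :=
  {p : ℤ × ℤ | p.1 ≠ 0 ∧ p.2 ≠ 0 ∧ |(p.1 : ℝ)| * |(p.2 : ℝ)| ≤ jb (k : ℝ) ^ (2 - 2 * α)}

lemma afinite (B : ℝ) :
    {p : ℤ × ℤ | p.1 ≠ 0 ∧ p.2 ≠ 0 ∧ |(p.1 : ℝ)| * |(p.2 : ℝ)| ≤ B}.Finite := by
  apply Set.Finite.subset ((Set.finite_Icc (-⌈B⌉) ⌈B⌉).prod (Set.finite_Icc (-⌈B⌉) ⌈B⌉))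
  rintro ⟨m, n⟩ ⟨hm, hn, hmn⟩
  have h1m : (1 : ℝ) ≤ |(m : ℝ)| := by exact_mod_cast Int.one_le_abs hm
  have h1n : (1 : ℝ) ≤ |(n : ℝ)| := by exact_mod_cast Int.one_le_abs hn
  have hmB : |(m : ℝ)| ≤ B := by nlinarith
  have hnB : |(n : ℝ)| ≤ B := by nlinarith
  have hBceil : B ≤ (⌈B⌉ : ℝ) := Int.le_ceil B
  constructor
  · refine Set.mem_Icc.mpr ⟨?_, ?_⟩
    · have : -(⌈B⌉ : ℝ) ≤ (m : ℝ) := by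
        have := neg_le_abs (m : ℝ); linarith
      exact_mod_cast this
    · have : (m : ℝ) ≤ (⌈B⌉ : ℝ) := by
        have := le_abs_self (m : ℝ); linarith
      exact_mod_cast this
  · refine Set.mem_Icc.mpr ⟨?_, ?_⟩
    · have : -(⌈B⌉ : ℝ) ≤ (n : ℝ) := by
        have := neg_le_abs (n : ℝ); linarith
      exact_mod_cast this
    · have : (n : ℝ) ≤ (⌈B⌉ : ℝ) := by
        have := le_abs_self (n : ℝ); linarith
      exact_mod_cast this

lemma aset_finite (α : ℝ) (k : ℤ) : (Aset α k).Finite := afinite _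

instance aset_finite' (α : ℝ) (k : ℤ) : Finite ↥(Aset α k) := (aset_finite α k).to_subtype

lemma jb_weight_id (k : ℝ) (s a : ℝ) :
    jb k ^ (s + a) * (jb k ^ (-s)) ^ 3 = jb k ^ (a - 2 * s) := by
  rw [← Real.rpow_natCast (jb k ^ (-s)) 3, ← Real.rpow_mul (jb_nonneg _),
    ← Real.rpow_add (jb_pos _)]
  norm_num
  ring_nf

/-- Step 1: pointwise bound. -/
lemma step1 (α s a c : ℝ) (hs0 : 0 < s) (hc0 : 0 < c)
    (hcomp : ∀ y x : ℝ, |x| ≤ 2 * jb y ^ (2 - 2*α) → c * jb y ≤ jb (y + x))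
    (u : ℤ → ℂ) (k : ℤ) :
    jb (k : ℝ) ^ (s + a) * ‖Rterm α u k‖ ≤
      jb (k : ℝ) ^ (a - 2*s) * wn s u k ^ 3
        + (c ^ (-s)) ^ 3 * (jb (k : ℝ) ^ (a - 2*s) *
          ∑' p : ↥(Aset α k),
            wn s u (k + (p : ℤ × ℤ).1) * wn s u (k + (p : ℤ × ℤ).1 + (p : ℤ × ℤ).2)
              * wn s u (k + (p : ℤ × ℤ).2)) := by
  have hBpos : (0:ℝ) < jb (k : ℝ) ^ (2 - 2*α) := Real.rpow_pos_of_pos (jb_pos _) _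
  -- slot bound
  have key : ∀ j : ℤ, c * jb (k : ℝ) ≤ jb (j : ℝ) →
      ‖u j‖ ≤ (c ^ (-s) * jb (k : ℝ) ^ (-s)) * wn s u j := by
    intro j hj
    have h1 : ‖u j‖ = jb (j:ℝ) ^ (-s) * wn s u j := by
      rw [wn, ← mul_assoc, ← Real.rpow_add (jb_pos _), neg_add_cancel, Real.rpow_zero, one_mul]
    have h2 : jb (j:ℝ) ^ (-s) ≤ (c * jb (k:ℝ)) ^ (-s) :=
      Real.rpow_le_rpow_of_nonpos (mul_pos hc0 (jb_pos _)) hj (by linarith)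
    rw [h1, Real.mul_rpow hc0.le (jb_nonneg _) ] at *
    exact mul_le_mul_of_nonneg_right h2 (wn_nonneg s u j)
  -- membership facts
  have hmem : ∀ p : ℤ × ℤ, p ∈ Aset α k →
      (c * jb (k:ℝ) ≤ jb ((k + p.1 : ℤ) : ℝ)) ∧
      (c * jb (k:ℝ) ≤ jb ((k + p.1 + p.2 : ℤ) : ℝ)) ∧
      (c * jb (k:ℝ) ≤ jb ((k + p.2 : ℤ) : ℝ)) := by
    rintro ⟨m, n⟩ ⟨hm, hn, hmn⟩
    have h1m : (1 : ℝ) ≤ |(m : ℝ)| := by exact_mod_cast Int.one_le_abs hm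
    have h1n : (1 : ℝ) ≤ |(n : ℝ)| := by exact_mod_cast Int.one_le_abs hn
    have hmB : |(m : ℝ)| ≤ jb (k : ℝ) ^ (2 - 2*α) := by nlinarith
    have hnB : |(n : ℝ)| ≤ jb (k : ℝ) ^ (2 - 2*α) := by nlinarith
    have hmnB : |(m : ℝ) + (n : ℝ)| ≤ 2 * jb (k : ℝ) ^ (2 - 2*α) :=
      (abs_add_le _ _).trans (by linarith)
    refine ⟨?_, ?_, ?_⟩
    · have := hcomp (k : ℝ) (m : ℝ) (by linarith)
      rwa [show ((k + m : ℤ) : ℝ) = (k : ℝ) + (m : ℝ) by push_cast; ring]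
    · have := hcomp (k : ℝ) ((m : ℝ) + (n : ℝ)) hmnB
      rwa [show ((k + m + n : ℤ) : ℝ) = (k : ℝ) + ((m : ℝ) + (n : ℝ)) by push_cast; ring]
    · have := hcomp (k : ℝ) (n : ℝ) (by linarith)
      rwa [show ((k + n : ℤ) : ℝ) = (k : ℝ) + (n : ℝ) by push_cast; ring]
  -- norm of Rterm
  have hR : ‖Rterm α u k‖ ≤ ‖u k‖ ^ 3 +
      ∑' p : ↥(Aset α k), ‖u (k + (p : ℤ×ℤ).1)‖ * ‖u (k + (p : ℤ×ℤ).1 + (p : ℤ×ℤ).2)‖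
        * ‖u (k + (p : ℤ×ℤ).2)‖ := by
    refine (norm_add_le _ _).trans ?_
    gcongr
    · rw [norm_neg, norm_mul, norm_pow, Complex.norm_real, norm_norm]; ring_nf; exact le_refl _
    · refine (norm_tsum_le_tsum_norm (f := fun p : ↥(Aset α k) =>
        u (k + (p : ℤ×ℤ).1) * star (u (k + (p : ℤ×ℤ).1 + (p : ℤ×ℤ).2)) * u (k + (p : ℤ×ℤ).2))
        Summable.of_finite).trans_eq ?_
      exact tsum_congr fun p => by rw [norm_mul, norm_mul, norm_star]
  -- termwise weighted bound
  have hterm : ∀ p : ↥(Aset α k),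
      ‖u (k + (p : ℤ×ℤ).1)‖ * ‖u (k + (p : ℤ×ℤ).1 + (p : ℤ×ℤ).2)‖ * ‖u (k + (p : ℤ×ℤ).2)‖
      ≤ (c ^ (-s) * jb (k:ℝ) ^ (-s))^3 *
        (wn s u (k + (p : ℤ×ℤ).1) * wn s u (k + (p : ℤ×ℤ).1 + (p : ℤ×ℤ).2)
          * wn s u (k + (p : ℤ×ℤ).2)) := by
    intro p
    obtain ⟨h1, h2, h3⟩ := hmem (p : ℤ×ℤ) p.2
    have k1 := key _ h1
    have k2 := key _ h2
    have k3 := key _ h3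
    have hX : (0:ℝ) ≤ c ^ (-s) * jb (k:ℝ) ^ (-s) :=
      mul_nonneg (Real.rpow_nonneg hc0.le _) (Real.rpow_nonneg (jb_nonneg _) _)
    have hXw : ∀ j : ℤ, (0:ℝ) ≤ (c ^ (-s) * jb (k:ℝ) ^ (-s)) * wn s u j :=
      fun j => mul_nonneg hX (wn_nonneg s u j)
    calc ‖u (k + (p : ℤ×ℤ).1)‖ * ‖u (k + (p : ℤ×ℤ).1 + (p : ℤ×ℤ).2)‖ * ‖u (k + (p : ℤ×ℤ).2)‖
        ≤ ((c ^ (-s) * jb (k:ℝ) ^ (-s)) * wn s u (k + (p : ℤ×ℤ).1)) *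
          ((c ^ (-s) * jb (k:ℝ) ^ (-s)) * wn s u (k + (p : ℤ×ℤ).1 + (p : ℤ×ℤ).2)) *
          ((c ^ (-s) * jb (k:ℝ) ^ (-s)) * wn s u (k + (p : ℤ×ℤ).2)) := by
          exact mul_le_mul (mul_le_mul k1 k2 (norm_nonneg _) (hXw _))
            k3 (norm_nonneg _) (mul_nonneg (hXw _) (hXw _))
      _ = _ := by ring
  have hsum : (∑' p : ↥(Aset α k), ‖u (k + (p : ℤ×ℤ).1)‖ * ‖u (k + (p : ℤ×ℤ).1 + (p : ℤ×ℤ).2)‖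
        * ‖u (k + (p : ℤ×ℤ).2)‖)
      ≤ (c ^ (-s) * jb (k:ℝ) ^ (-s))^3 * ∑' p : ↥(Aset α k),
          (wn s u (k + (p : ℤ×ℤ).1) * wn s u (k + (p : ℤ×ℤ).1 + (p : ℤ×ℤ).2)
          * wn s u (k + (p : ℤ×ℤ).2)) := by
    rw [← tsum_mul_left]
    exact Summable.tsum_le_tsum hterm Summable.of_finite Summable.of_finite
  -- assemble
  have hker : ‖u k‖ = jb (k:ℝ) ^ (-s) * wn s u k := by
    rw [wn, ← mul_assoc, ← Real.rpow_add (jb_pos _), neg_add_cancel, Real.rpow_zero, one_mul]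
  have hw1 := jb_weight_id (k : ℝ) s a
  have hjba : (0:ℝ) ≤ jb (k:ℝ) ^ (s + a) := Real.rpow_nonneg (jb_nonneg _) _
  calc jb (k : ℝ) ^ (s + a) * ‖Rterm α u k‖
      ≤ jb (k : ℝ) ^ (s + a) * (‖u k‖ ^ 3 + ∑' p : ↥(Aset α k), ‖u (k + (p : ℤ×ℤ).1)‖
          * ‖u (k + (p : ℤ×ℤ).1 + (p : ℤ×ℤ).2)‖ * ‖u (k + (p : ℤ×ℤ).2)‖) :=
        mul_le_mul_of_nonneg_left hR hjba
    _ ≤ jb (k : ℝ) ^ (s + a) * ((jb (k:ℝ) ^ (-s) * wn s u k) ^ 3 +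
          (c ^ (-s) * jb (k:ℝ) ^ (-s))^3 * ∑' p : ↥(Aset α k),
          (wn s u (k + (p : ℤ×ℤ).1) * wn s u (k + (p : ℤ×ℤ).1 + (p : ℤ×ℤ).2)
          * wn s u (k + (p : ℤ×ℤ).2))) := by
        refine mul_le_mul_of_nonneg_left ?_ hjba
        rw [← hker]
        exact add_le_add (le_refl _) hsum
    _ = jb (k : ℝ) ^ (a - 2*s) * wn s u k ^ 3
        + (c ^ (-s)) ^ 3 * (jb (k : ℝ) ^ (a - 2*s) * ∑' p : ↥(Aset α k),
          (wn s u (k + (p : ℤ×ℤ).1) * wn s u (k + (p : ℤ×ℤ).1 + (p : ℤ×ℤ).2)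
          * wn s u (k + (p : ℤ×ℤ).2))) := by
        rw [← hw1]; ring

lemma jb_sq (y x : ℝ) : (jb y ^ x) ^ 2 = jb y ^ (2 * x) := by
  rw [← Real.rpow_natCast (jb y ^ x) 2, ← Real.rpow_mul (jb_nonneg _)]
  norm_num [mul_comm]

open scoped Classical in
lemma core (α s a ρ : ℝ) (hρ0 : 0 < ρ)
    (hρ : ∀ y t : ℝ, 1 ≤ t → t ≤ jb y ^ (2 - 2*α) →
      jb y ^ (2*a - 4*s + (2 - 2*α)) ≤ t ^ (-ρ))
    (hKsum : Summable fun n : ℤ => |(n : ℝ)| ^ (-(1 + ρ)))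
    (u : ℤ → ℂ) :
    ∑' k : ℤ, ENNReal.ofReal (jb (k : ℝ) ^ (a - 2*s)) ^ 2 *
      (ENNReal.ofReal (∑' p : ↥(Aset α k),
        wn s u (k + (p : ℤ×ℤ).1) * wn s u (k + (p : ℤ×ℤ).1 + (p : ℤ×ℤ).2)
          * wn s u (k + (p : ℤ×ℤ).2))) ^ 2
    ≤ ENNReal.ofReal (2 * ∑' n : ℤ, |(n : ℝ)| ^ (-(1 + ρ)))
        * (∑' j : ℤ, ENNReal.ofReal (wn s u j) ^ 2) ^ 3 := by
  set bE : ℤ → ℝ≥0∞ := fun j => ENNReal.ofReal (wn s u j) with hbE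
  set S : ℝ≥0∞ := ∑' j : ℤ, bE j ^ 2 with hS
  set B : ℤ → ℝ := fun k => jb (k : ℝ) ^ (2 - 2*α) with hB
  set χ : ℤ → ℤ × ℤ → ℝ≥0∞ := fun k p => if p ∈ Aset α k then 1 else 0 with hχ
  set ψ : ℤ → ℤ → ℝ≥0∞ := fun k n => if n ≠ 0 ∧ |(n : ℝ)| ≤ B k then 1 else 0 with hψ
  have hχ1 : ∀ {k : ℤ} {p : ℤ × ℤ}, p ∈ Aset α k → χ k p = 1 := fun h => if_pos h
  have hχ0 : ∀ {k : ℤ} {p : ℤ × ℤ}, p ∉ Aset α k → χ k p = 0 := fun h => if_neg h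
  have hψ1 : ∀ {k n : ℤ}, (n ≠ 0 ∧ |(n : ℝ)| ≤ B k) → ψ k n = 1 := fun h => if_pos h
  have hψ0 : ∀ {k n : ℤ}, ¬(n ≠ 0 ∧ |(n : ℝ)| ≤ B k) → ψ k n = 0 := fun h => if_neg h
  have hBpos : ∀ k : ℤ, 0 < B k := fun k => Real.rpow_pos_of_pos (jb_pos _) _
  have htrans : ∀ n : ℤ, ∑' k : ℤ, bE (k + n) ^ 2 = S :=
    fun n => (Equiv.addRight n).tsum_eq (fun j => bE j ^ 2)
  have htransL : ∀ n : ℤ, ∑' k : ℤ, bE (n + k) ^ 2 = S :=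
    fun n => (Equiv.addLeft n).tsum_eq (fun j => bE j ^ 2)
  -- 4a : ofReal of the subtype sum
  have h4a : ∀ k : ℤ, ENNReal.ofReal (∑' p : ↥(Aset α k),
        wn s u (k + (p : ℤ×ℤ).1) * wn s u (k + (p : ℤ×ℤ).1 + (p : ℤ×ℤ).2)
          * wn s u (k + (p : ℤ×ℤ).2))
      = ∑' p : ℤ × ℤ, χ k p * (bE (k + p.1) * bE (k + p.1 + p.2) * bE (k + p.2)) := by
    intro k
    rw [ENNReal.ofReal_tsum_of_nonneg (fun p => mul_nonneg (mul_nonneg (wn_nonneg _ _ _)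
      (wn_nonneg _ _ _)) (wn_nonneg _ _ _)) Summable.of_finite,
      tsum_subtype (Aset α k) (fun p => ENNReal.ofReal
        (wn s u (k + p.1) * wn s u (k + p.1 + p.2) * wn s u (k + p.2)))]
    refine tsum_congr fun p => ?_
    by_cases hp : p ∈ Aset α k
    · rw [Set.indicator_of_mem hp, hχ1 hp, one_mul,
        ENNReal.ofReal_mul (mul_nonneg (wn_nonneg _ _ _) (wn_nonneg _ _ _)),
        ENNReal.ofReal_mul (wn_nonneg _ _ _)]
    · rw [Set.indicator_of_notMem hp, hχ0 hp, zero_mul]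
  -- Cauchy-Schwarz
  have hcs : ∀ k : ℤ,
      (∑' p : ℤ × ℤ, χ k p * (bE (k + p.1) * bE (k + p.1 + p.2) * bE (k + p.2))) ^ 2
      ≤ (∑' p : ℤ × ℤ, χ k p * (bE (k + p.1) * bE (k + p.1 + p.2)) ^ 2)
        * (∑' p : ℤ × ℤ, χ k p * bE (k + p.2) ^ 2) := by
    intro k
    have h1 : ∀ p : ℤ × ℤ, (χ k p * (bE (k + p.1) * bE (k + p.1 + p.2)))
        * (χ k p * bE (k + p.2)) = χ k p * (bE (k + p.1) * bE (k + p.1 + p.2) * bE (k + p.2)) := by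
      intro p
      by_cases hp : p ∈ Aset α k
      · rw [hχ1 hp]; ring
      · rw [hχ0 hp]; ring
    have h2 : ∀ p : ℤ × ℤ, (χ k p * (bE (k + p.1) * bE (k + p.1 + p.2))) ^ 2
        = χ k p * (bE (k + p.1) * bE (k + p.1 + p.2)) ^ 2 := by
      intro p
      by_cases hp : p ∈ Aset α k
      · rw [hχ1 hp, one_mul, one_mul]
      · rw [hχ0 hp, zero_mul, zero_mul]; exact zero_pow (by norm_num)
    have h3 : ∀ p : ℤ × ℤ, (χ k p * bE (k + p.2)) ^ 2 = χ k p * bE (k + p.2) ^ 2 := by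
      intro p
      by_cases hp : p ∈ Aset α k
      · rw [hχ1 hp, one_mul, one_mul]
      · rw [hχ0 hp, zero_mul, zero_mul]; exact zero_pow (by norm_num)
    calc (∑' p : ℤ × ℤ, χ k p * (bE (k + p.1) * bE (k + p.1 + p.2) * bE (k + p.2))) ^ 2
        = (∑' p : ℤ × ℤ, (χ k p * (bE (k + p.1) * bE (k + p.1 + p.2)))
            * (χ k p * bE (k + p.2))) ^ 2 := by rw [tsum_congr h1]
      _ ≤ (∑' p : ℤ × ℤ, (χ k p * (bE (k + p.1) * bE (k + p.1 + p.2))) ^ 2)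
            * (∑' p : ℤ × ℤ, (χ k p * bE (k + p.2)) ^ 2) := tsum_cs _ _
      _ = _ := by rw [tsum_congr h2, tsum_congr h3]
  -- P bound
  have hP : ∀ k : ℤ, (∑' p : ℤ × ℤ, χ k p * (bE (k + p.1) * bE (k + p.1 + p.2)) ^ 2) ≤ S * S := by
    intro k
    have h1 : ∀ p : ℤ × ℤ, χ k p * (bE (k + p.1) * bE (k + p.1 + p.2)) ^ 2
        ≤ bE (k + p.1) ^ 2 * bE (k + p.1 + p.2) ^ 2 := by
      intro p
      rw [← mul_pow]
      by_cases hp : p ∈ Aset α k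
      · rw [hχ1 hp, one_mul]
      · rw [hχ0 hp, zero_mul]; exact zero_le
    refine (ENNReal.tsum_le_tsum h1).trans ?_
    rw [ENNReal.tsum_prod']
    have h2 : ∀ m : ℤ, ∑' n : ℤ, bE (k + m) ^ 2 * bE (k + m + n) ^ 2 = bE (k + m) ^ 2 * S := by
      intro m
      rw [ENNReal.tsum_mul_left, htransL (k + m)]
    refine le_of_eq ?_
    calc ∑' m : ℤ, ∑' n : ℤ, bE (k + m) ^ 2 * bE (k + m + n) ^ 2
        = ∑' m : ℤ, bE (k + m) ^ 2 * S := tsum_congr h2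
      _ = (∑' m : ℤ, bE (k + m) ^ 2) * S := ENNReal.tsum_mul_right
      _ = S * S := by rw [htransL k]
  -- Q bound
  have hQ : ∀ k : ℤ, (∑' p : ℤ × ℤ, χ k p * bE (k + p.2) ^ 2)
      ≤ ∑' n : ℤ, ψ k n * ENNReal.ofReal (2 * (B k / |(n : ℝ)|)) * bE (k + n) ^ 2 := by
    intro k
    rw [ENNReal.tsum_prod', ENNReal.tsum_comm]
    refine ENNReal.tsum_le_tsum fun n => ?_
    have hmr : ∑' m : ℤ, χ k (m, n) * bE (k + n) ^ 2
        = (∑' m : ℤ, χ k (m, n)) * bE (k + n) ^ 2 := ENNReal.tsum_mul_right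
    refine le_of_le_of_eq (le_of_eq_of_le hmr ?_) rfl
    refine mul_le_mul_left ?_ _
    -- goal : ∑' m, χ k (m, n) ≤ ψ k n * ofReal (2 * (B k / |n|))
    by_cases hn : n ≠ 0 ∧ |(n : ℝ)| ≤ B k
    · rw [hψ1 hn, one_mul]
      refine le_trans (ENNReal.tsum_le_tsum (fun m => ?_)) (count_bound (B k / |(n : ℝ)|))
      by_cases hp : ((m, n) : ℤ × ℤ) ∈ Aset α k
      · have h1n : (0 : ℝ) < |(n : ℝ)| := by
          have h := Int.one_le_abs hn.1
          have h' : (1:ℝ) ≤ |(n:ℝ)| := by exact_mod_cast h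
          linarith
        have hm1 : m ≠ 0 := hp.1
        have hm2 : |(m : ℝ)| ≤ B k / |(n : ℝ)| := (le_div_iff₀ h1n).mpr hp.2.2
        rw [hχ1 hp, if_pos ⟨hm1, hm2⟩]
      · rw [hχ0 hp]; exact zero_le
    · rw [hψ0 hn, zero_mul]
      have hz : ∀ m : ℤ, χ k (m, n) = 0 := by
        intro m
        refine hχ0 fun hp => ?_
        have h1m : (1 : ℝ) ≤ |(m : ℝ)| := by exact_mod_cast Int.one_le_abs hp.1
        have habs : |(n : ℝ)| ≤ B k := by
          have h2 := hp.2.2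
          have h0n : (0:ℝ) ≤ |(n:ℝ)| := abs_nonneg _
          nlinarith
        exact hn ⟨hp.2.1, habs⟩
      simp [hz]
  -- pointwise weight bound
  have hw : ∀ (k n : ℤ), ENNReal.ofReal (jb (k : ℝ) ^ (a - 2*s)) ^ 2 *
      (ψ k n * ENNReal.ofReal (2 * (B k / |(n : ℝ)|)))
      ≤ ENNReal.ofReal (2 * |(n : ℝ)| ^ (-(1 + ρ))) := by
    intro k n
    by_cases hn : n ≠ 0 ∧ |(n : ℝ)| ≤ B k
    · have h1n : (1 : ℝ) ≤ |(n : ℝ)| := by exact_mod_cast Int.one_le_abs hn.1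
      have h0n : (0 : ℝ) < |(n : ℝ)| := lt_of_lt_of_le one_pos h1n
      rw [hψ1 hn, one_mul, ← ENNReal.ofReal_pow (Real.rpow_nonneg (jb_nonneg _) _),
        ← ENNReal.ofReal_mul (by positivity)]
      refine ENNReal.ofReal_le_ofReal ?_
      have hkey : jb (k : ℝ) ^ (2*a - 4*s + (2 - 2*α)) ≤ |(n : ℝ)| ^ (-ρ) :=
        hρ (k : ℝ) _ h1n hn.2
      have e1 : (jb (k : ℝ) ^ (a - 2*s)) ^ 2 * (2 * (B k / |(n : ℝ)|))
          = 2 * (jb (k : ℝ) ^ (2*a - 4*s + (2 - 2*α)) / |(n : ℝ)|) := by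
        have hadd := Real.rpow_add (jb_pos (k:ℝ)) (2*(a - 2*s)) (2 - 2*α)
        rw [jb_sq, hB, show 2*a - 4*s + (2 - 2*α) = 2*(a - 2*s) + (2 - 2*α) by ring, hadd]
        ring
      have e2 : |(n : ℝ)| ^ (-(1 + ρ)) = |(n : ℝ)| ^ (-ρ) / |(n : ℝ)| := by
        rw [show -(1 + ρ) = -ρ + -1 by ring, Real.rpow_add h0n, Real.rpow_neg_one,
          div_eq_mul_inv]
      rw [e1, e2]
      gcongr
    · rw [hψ0 hn, zero_mul, mul_zero]
      exact zero_le
  -- assemble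
  set W : ℤ → ℝ≥0∞ := fun k => ENNReal.ofReal (jb (k : ℝ) ^ (a - 2*s)) ^ 2 with hW
  have step : ∀ k : ℤ, W k * (ENNReal.ofReal (∑' p : ↥(Aset α k),
        wn s u (k + (p : ℤ×ℤ).1) * wn s u (k + (p : ℤ×ℤ).1 + (p : ℤ×ℤ).2)
          * wn s u (k + (p : ℤ×ℤ).2))) ^ 2
      ≤ (S * S) * ∑' n : ℤ, (W k * (ψ k n * ENNReal.ofReal (2 * (B k / |(n : ℝ)|))))
          * bE (k + n) ^ 2 := by
    intro k
    rw [h4a k]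
    calc W k * (∑' p : ℤ × ℤ, χ k p * (bE (k + p.1) * bE (k + p.1 + p.2) * bE (k + p.2))) ^ 2
        ≤ W k * ((S * S) * ∑' n : ℤ, ψ k n * ENNReal.ofReal (2 * (B k / |(n : ℝ)|))
            * bE (k + n) ^ 2) := by
          refine mul_le_mul_right ((hcs k).trans ?_) _
          exact mul_le_mul' (hP k) (hQ k)
      _ = (S * S) * ∑' n : ℤ, (W k * (ψ k n * ENNReal.ofReal (2 * (B k / |(n : ℝ)|))))
            * bE (k + n) ^ 2 := by
          have hpull : ∑' n : ℤ, (W k * (ψ k n * ENNReal.ofReal (2 * (B k / |(n:ℝ)|))))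
              * bE (k + n) ^ 2
              = W k * ∑' n : ℤ, ψ k n * ENNReal.ofReal (2 * (B k / |(n:ℝ)|))
                  * bE (k + n) ^ 2 := by
            rw [← ENNReal.tsum_mul_left]
            exact tsum_congr fun n => by ring
          rw [hpull]
          ring
  calc ∑' k : ℤ, W k * (ENNReal.ofReal (∑' p : ↥(Aset α k),
        wn s u (k + (p : ℤ×ℤ).1) * wn s u (k + (p : ℤ×ℤ).1 + (p : ℤ×ℤ).2)
          * wn s u (k + (p : ℤ×ℤ).2))) ^ 2
      ≤ ∑' k : ℤ, (S * S) * ∑' n : ℤ, (W k * (ψ k n * ENNReal.ofReal (2 * (B k / |(n : ℝ)|))))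
          * bE (k + n) ^ 2 := ENNReal.tsum_le_tsum step
    _ = (S * S) * ∑' k : ℤ, ∑' n : ℤ, (W k * (ψ k n * ENNReal.ofReal (2 * (B k / |(n : ℝ)|))))
          * bE (k + n) ^ 2 := ENNReal.tsum_mul_left
    _ ≤ (S * S) * ∑' k : ℤ, ∑' n : ℤ, ENNReal.ofReal (2 * |(n : ℝ)| ^ (-(1 + ρ)))
          * bE (k + n) ^ 2 := by
          refine mul_le_mul_right (ENNReal.tsum_le_tsum fun k =>
            ENNReal.tsum_le_tsum fun n => ?_) _
          exact mul_le_mul_left (hw k n) _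
    _ = (S * S) * ∑' n : ℤ, ∑' k : ℤ, ENNReal.ofReal (2 * |(n : ℝ)| ^ (-(1 + ρ)))
          * bE (k + n) ^ 2 := by rw [ENNReal.tsum_comm]
    _ = (S * S) * ∑' n : ℤ, ENNReal.ofReal (2 * |(n : ℝ)| ^ (-(1 + ρ))) * S := by
          refine congrArg _ (tsum_congr fun n => ?_)
          rw [ENNReal.tsum_mul_left, htrans n]
    _ = (S * S) * ((∑' n : ℤ, ENNReal.ofReal (2 * |(n : ℝ)| ^ (-(1 + ρ)))) * S) := by
          rw [ENNReal.tsum_mul_right]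
    _ = ENNReal.ofReal (2 * ∑' n : ℤ, |(n : ℝ)| ^ (-(1 + ρ))) * S ^ 3 := by
          rw [← ENNReal.ofReal_tsum_of_nonneg (fun n => by positivity) (hKsum.mul_left 2),
            tsum_mul_left]
          ring

lemma ennreal_sq_add (x y : ℝ≥0∞) : (x + y) ^ 2 ≤ 4 * x ^ 2 + 4 * y ^ 2 := by
  have h1 : x + y ≤ 2 * (x ⊔ y) := by
    rw [two_mul]; exact add_le_add le_sup_left le_sup_right
  calc (x + y) ^ 2 ≤ (2 * (x ⊔ y)) ^ 2 := pow_le_pow_left' h1 2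
    _ = 4 * (x ⊔ y) ^ 2 := by rw [mul_pow]; norm_num
    _ ≤ 4 * x ^ 2 + 4 * y ^ 2 := by
        rcases le_total x y with h | h
        · rw [sup_eq_right.mpr h]; exact le_add_self
        · rw [sup_eq_left.mpr h]; exact le_self_add

/-- Fix `α ∈ (1/2,1]`, `s > 3/4 - α/2`, `a ≤ 2α-1` with additionally
`a < 2s+α-1` in case `2s+α-1 ≤ 2α-1`. There is `C = C(s,α,a)`, independent of `u`, such
that for every `u : ℤ → ℂ` with `‖u‖_{H^s} < ∞`,
`(∑_k ⟨k⟩^{2(s+a)} |R_k|²)^{1/2} ≤ C ‖u‖_{H^s}³`. -/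
theorem stmt10 (α s a : ℝ) (hα1 : 1 / 2 < α) (hα2 : α ≤ 1) (hs : 3 / 4 - α / 2 < s)
    (ha : a ≤ 2 * α - 1) (ha' : 2 * s + α - 1 ≤ 2 * α - 1 → a < 2 * s + α - 1) :
    ∃ C : ℝ, 0 < C ∧ ∀ u : ℤ → ℂ,
      Summable (fun k : ℤ => jb (k : ℝ) ^ (2 * s) * ‖u k‖ ^ 2) →
        Real.sqrt (∑' k : ℤ, jb (k : ℝ) ^ (2 * (s + a)) * ‖Rterm α u k‖ ^ 2)
          ≤ C * HsNorm s u ^ 3 := by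
  have hs0 : 0 < s := by linarith
  have haE : a < 2 * s + α - 1 := by
    by_cases h : 2 * s + α - 1 ≤ 2 * α - 1
    · exact ha' h
    · push_neg at h; linarith
  have ha2s : a ≤ 2 * s := by linarith
  have hθ0 : (0:ℝ) ≤ 2 - 2 * α := by linarith
  have hθ1 : 2 - 2 * α < 1 := by linarith
  obtain ⟨c, hc0, hc1, hcomp⟩ := jb_comp (2 - 2 * α) hθ0 hθ1
  have hE : 2 * a - 4 * s + (2 - 2 * α) < 0 := by linarith
  obtain ⟨ρ, hρ0, hρ⟩ := rho_exists (2 - 2 * α) (2 * a - 4 * s + (2 - 2 * α)) hθ0 hE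
  have hKsum : Summable fun n : ℤ => |(n : ℝ)| ^ (-(1 + ρ)) :=
    Real.summable_abs_int_rpow (by linarith)
  set K : ℝ := ∑' n : ℤ, |(n : ℝ)| ^ (-(1 + ρ)) with hK
  have hK0 : 0 ≤ K := tsum_nonneg fun n => Real.rpow_nonneg (abs_nonneg _) _
  have hcs0 : (0:ℝ) ≤ (c ^ (-s)) ^ 3 := pow_nonneg (Real.rpow_nonneg hc0.le _) 3
  set C₀ : ℝ := 4 + 4 * ((c ^ (-s)) ^ 3) ^ 2 * (2 * K) with hC₀
  have hC₀0 : 0 ≤ C₀ := by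
    have : (0:ℝ) ≤ 4 * ((c ^ (-s)) ^ 3) ^ 2 * (2 * K) := by positivity
    linarith
  refine ⟨max 1 (Real.sqrt C₀), lt_of_lt_of_le one_pos (le_max_left _ _), fun u hu => ?_⟩
  set bE : ℤ → ℝ≥0∞ := fun j => ENNReal.ofReal (wn s u j) with hbE
  set S : ℝ≥0∞ := ∑' j : ℤ, bE j ^ 2 with hS
  set Sg : ℤ → ℝ := fun k => ∑' p : ↥(Aset α k),
      wn s u (k + (p : ℤ×ℤ).1) * wn s u (k + (p : ℤ×ℤ).1 + (p : ℤ×ℤ).2)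
        * wn s u (k + (p : ℤ×ℤ).2) with hSg
  have hSg0 : ∀ k, 0 ≤ Sg k := fun k => tsum_nonneg fun p =>
    mul_nonneg (mul_nonneg (wn_nonneg _ _ _) (wn_nonneg _ _ _)) (wn_nonneg _ _ _)
  set X2 : ℝ≥0∞ := ENNReal.ofReal ((c ^ (-s)) ^ 3) ^ 2 with hX2
  set W : ℤ → ℝ≥0∞ := fun k => ENNReal.ofReal (jb (k : ℝ) ^ (a - 2 * s)) ^ 2 with hW
  -- pointwise bound
  have hptw : ∀ k : ℤ, ENNReal.ofReal (jb (k : ℝ) ^ (2 * (s + a)) * ‖Rterm α u k‖ ^ 2)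
      ≤ 4 * (bE k ^ 2 * S ^ 2) + 4 * (X2 * (W k * ENNReal.ofReal (Sg k) ^ 2)) := by
    intro k
    have h0 : jb (k : ℝ) ^ (2 * (s + a)) * ‖Rterm α u k‖ ^ 2
        = (jb (k : ℝ) ^ (s + a) * ‖Rterm α u k‖) ^ 2 := by rw [mul_pow, jb_sq]
    rw [h0, ENNReal.ofReal_pow (mul_nonneg (Real.rpow_nonneg (jb_nonneg _) _) (norm_nonneg _))]
    have h1 := step1 α s a c hs0 hc0 hcomp u k
    have h2 : ENNReal.ofReal (jb (k : ℝ) ^ (s + a) * ‖Rterm α u k‖)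
        ≤ ENNReal.ofReal (jb (k : ℝ) ^ (a - 2 * s) * wn s u k ^ 3)
          + ENNReal.ofReal ((c ^ (-s)) ^ 3 * (jb (k : ℝ) ^ (a - 2 * s) * Sg k)) :=
      (ENNReal.ofReal_le_ofReal h1).trans ENNReal.ofReal_add_le
    refine (pow_le_pow_left' h2 2).trans ((ennreal_sq_add _ _).trans ?_)
    gcongr
    · -- D^2 ≤ bE k^2 * S^2
      have hD : ENNReal.ofReal (jb (k : ℝ) ^ (a - 2 * s) * wn s u k ^ 3) ≤ bE k ^ 3 := by
        refine (ENNReal.ofReal_le_ofReal (mul_le_of_le_one_left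
          (pow_nonneg (wn_nonneg _ _ _) 3)
          (Real.rpow_le_one_of_one_le_of_nonpos (one_le_jb _) (by linarith)))).trans ?_
        rw [ENNReal.ofReal_pow (wn_nonneg _ _ _)]
      refine (pow_le_pow_left' hD 2).trans ?_
      have e : (bE k ^ 3) ^ 2 = bE k ^ 2 * (bE k ^ 2) ^ 2 := by ring
      rw [e]
      exact mul_le_mul_right (pow_le_pow_left' (ENNReal.le_tsum k) 2) _
    · -- G^2 ≤ X2 * (W k * ofReal(Sg k)^2)
      have hG : ENNReal.ofReal ((c ^ (-s)) ^ 3 * (jb (k : ℝ) ^ (a - 2 * s) * Sg k))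
          = ENNReal.ofReal ((c ^ (-s)) ^ 3) *
            (ENNReal.ofReal (jb (k : ℝ) ^ (a - 2 * s)) * ENNReal.ofReal (Sg k)) := by
        rw [ENNReal.ofReal_mul hcs0, ENNReal.ofReal_mul (Real.rpow_nonneg (jb_nonneg _) _)]
      rw [hG]
      refine le_of_eq ?_
      rw [hX2, hW]
      ring
  -- main bound
  have hmain : ∑' k : ℤ, ENNReal.ofReal (jb (k : ℝ) ^ (2 * (s + a)) * ‖Rterm α u k‖ ^ 2)
      ≤ ENNReal.ofReal C₀ * S ^ 3 := by
    have hcore := core α s a ρ hρ0 hρ hKsum u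
    calc ∑' k : ℤ, ENNReal.ofReal (jb (k : ℝ) ^ (2 * (s + a)) * ‖Rterm α u k‖ ^ 2)
        ≤ ∑' k : ℤ, (4 * (bE k ^ 2 * S ^ 2) + 4 * (X2 * (W k * ENNReal.ofReal (Sg k) ^ 2))) :=
          ENNReal.tsum_le_tsum hptw
      _ = 4 * (S * S ^ 2)
          + 4 * (X2 * ∑' k : ℤ, W k * ENNReal.ofReal (Sg k) ^ 2) := by
          rw [ENNReal.tsum_add, ENNReal.tsum_mul_left, ENNReal.tsum_mul_left,
            ENNReal.tsum_mul_right, ENNReal.tsum_mul_left, ← hS]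
      _ ≤ 4 * (S * S ^ 2) + 4 * (X2 * (ENNReal.ofReal (2 * K) * S ^ 3)) := by
          gcongr
      _ = (4 + 4 * X2 * ENNReal.ofReal (2 * K)) * S ^ 3 := by ring
      _ = ENNReal.ofReal C₀ * S ^ 3 := by
          have e4 : ENNReal.ofReal (4:ℝ) = 4 := by norm_num
          have hexp : ENNReal.ofReal C₀ = 4 + 4 * X2 * ENNReal.ofReal (2 * K) := by
            rw [hC₀, ENNReal.ofReal_add (by norm_num)
              (mul_nonneg (mul_nonneg (by norm_num) (sq_nonneg _)) (by linarith)), e4]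
            congr 1
            rw [show (4:ℝ) * ((c ^ (-s)) ^ 3) ^ 2 * (2 * K)
                = 4 * (((c ^ (-s)) ^ 3) ^ 2 * (2 * K)) by ring,
              ENNReal.ofReal_mul (by norm_num), e4,
              ENNReal.ofReal_mul (sq_nonneg _), hX2, ENNReal.ofReal_pow hcs0]
            ring
          rw [hexp]
  -- conversion to the real statement
  set F : ℤ → ℝ := fun k => jb (k : ℝ) ^ (2 * (s + a)) * ‖Rterm α u k‖ ^ 2 with hF
  have hF0 : ∀ k, 0 ≤ F k := fun k =>
    mul_nonneg (Real.rpow_nonneg (jb_nonneg _) _) (sq_nonneg _)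
  set Sreal : ℝ := ∑' k : ℤ, jb (k : ℝ) ^ (2 * s) * ‖u k‖ ^ 2 with hSreal
  have hSreal0 : 0 ≤ Sreal := tsum_nonneg fun k =>
    mul_nonneg (Real.rpow_nonneg (jb_nonneg _) _) (sq_nonneg _)
  have hSeq : S = ENNReal.ofReal Sreal := by
    rw [hSreal, ENNReal.ofReal_tsum_of_nonneg (fun k =>
      mul_nonneg (Real.rpow_nonneg (jb_nonneg _) _) (sq_nonneg _)) hu]
    refine tsum_congr fun j => ?_
    rw [hbE, ← ENNReal.ofReal_pow (wn_nonneg _ _ _)]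
    congr 1
    rw [wn, mul_pow, jb_sq]
  have hHs : HsNorm s u = Real.sqrt Sreal := rfl
  have hcube : Real.sqrt (Sreal ^ 3) = Real.sqrt Sreal ^ 3 := by
    have h6 : (Real.sqrt Sreal ^ 3) ^ 2 = Sreal ^ 3 := by
      rw [← pow_mul, mul_comm, pow_mul, Real.sq_sqrt hSreal0]
    rw [← h6, Real.sqrt_sq (pow_nonneg (Real.sqrt_nonneg _) 3)]
  by_cases hsumF : Summable F
  · have h1 : ENNReal.ofReal (∑' k, F k) = ∑' k, ENNReal.ofReal (F k) :=
      ENNReal.ofReal_tsum_of_nonneg hF0 hsumF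
    have h4 : ∑' k, F k ≤ C₀ * Sreal ^ 3 := by
      have h3 : ENNReal.ofReal C₀ * S ^ 3 = ENNReal.ofReal (C₀ * Sreal ^ 3) := by
        rw [hSeq, ← ENNReal.ofReal_pow hSreal0, ← ENNReal.ofReal_mul hC₀0]
      refine (ENNReal.ofReal_le_ofReal_iff (by positivity)).mp ?_
      rw [h1]
      exact hmain.trans_eq h3
    calc Real.sqrt (∑' k, F k) ≤ Real.sqrt (C₀ * Sreal ^ 3) := Real.sqrt_le_sqrt h4
      _ = Real.sqrt C₀ * Real.sqrt Sreal ^ 3 := by rw [Real.sqrt_mul hC₀0, hcube]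
      _ ≤ max 1 (Real.sqrt C₀) * HsNorm s u ^ 3 := by
          rw [hHs]
          exact mul_le_mul_of_nonneg_right (le_max_right _ _)
            (pow_nonneg (Real.sqrt_nonneg _) 3)
  · rw [tsum_eq_zero_of_not_summable hsumF, Real.sqrt_zero]
    refine mul_nonneg (le_trans zero_le_one (le_max_left _ _)) ?_
    rw [hHs]
    exact pow_nonneg (Real.sqrt_nonneg _) 3
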